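/- arXiv:2309.05183 — 4 statements merged into one kernel-verified Lean document; each statement's English description precedes it below -/
import Mathlib

section
/- Let f be a submodular set function on a finite ground set Ω with f defined on all subsets, and let A be a finite set output by the trim procedure applied to B (repeatedly removing elements with negative marginal contribution, each element checked once in some order, where an element once checked is never rechecked). Then every x ∈ A satisfies f(A) − f(A \ {x}) ≥ 0. -/
/-!
Submodularity makes the marginal contribution `f S - f (S.erase x)` antitone in `S`. When `x`
is checked and kept, its contribution to the current set is nonnegative, and the set only shrinks
afterwards, so the contribution to the final set stays nonnegative; an element checked and
removed never comes back.
-/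

def Submodular {α : Type*} [DecidableEq α] (f : Finset α → ℝ) : Prop :=
  ∀ S T : Finset α, f (S ∪ T) + f (S ∩ T) ≤ f S + f T

/-- The trim procedure: scan the elements in the order given by the list `l`,
removing an element whenever its marginal contribution to the current set is negative.
Each element is checked exactly once. -/
noncomputable def trimFold {α : Type*} [DecidableEq α] (f : Finset α → ℝ) : List α → Finset α → Finset α
  | [], A => A
  | x :: xs, A => if f A - f (A.erase x) < 0 then trimFold f xs (A.erase x) else trimFold f xs A

section

open Finset

variable {α : Type*} [DecidableEq α] {f : Finset α → ℝ}

theorem Submodular.sub_erase_le_sub_erase (hf : Submodular f) {A B : Finset α} {x : α}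
    (hAB : A ⊆ B) (hx : x ∈ A) : f B - f (B.erase x) ≤ f A - f (A.erase x) := by
  have h := hf A (B.erase x)
  rw [union_erase_of_mem hx, union_eq_right.mpr hAB, inter_erase, inter_eq_left.mpr hAB] at h
  linarith

theorem trimFold_subset (f : Finset α → ℝ) : ∀ (l : List α) (B : Finset α), trimFold f l B ⊆ B
  | [], _ => subset_rfl
  | x :: xs, B => by
    rw [trimFold]
    split
    · exact (trimFold_subset f xs _).trans (erase_subset _ _)
    · exact trimFold_subset f xs B

theorem trimFold_sub_erase_nonneg (hf : Submodular f) :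
    ∀ {l : List α} {B : Finset α} {x : α}, x ∈ l → x ∈ trimFold f l B →
      0 ≤ f (trimFold f l B) - f ((trimFold f l B).erase x)
  | [], _, _, hxl, _ => absurd hxl List.not_mem_nil
  | y :: ys, B, x, hxl, hx => by
    rw [trimFold] at hx ⊢
    split_ifs at hx ⊢ with hneg
    · obtain rfl | hxys := List.mem_cons.mp hxl
      · exact absurd (trimFold_subset f ys _ hx) (notMem_erase x B)
      · exact trimFold_sub_erase_nonneg hf hxys hx
    · obtain rfl | hxys := List.mem_cons.mp hxl
      · calc 0 ≤ f B - f (B.erase x) := not_lt.mp hneg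
          _ ≤ _ := hf.sub_erase_le_sub_erase (trimFold_subset f ys B) hx
      · exact trimFold_sub_erase_nonneg hf hxys hx

end

theorem stmt3_general {α : Type*} [DecidableEq α] (f : Finset α → ℝ)
    (hf : Submodular f) (B : Finset α) (l : List α) (hl : ∀ x ∈ B, x ∈ l)
    (A : Finset α) (hA : A = trimFold f l B) :
    ∀ x ∈ A, f A - f (A.erase x) ≥ 0 := by
  subst hA
  intro x hx
  exact trimFold_sub_erase_nonneg hf (hl x (trimFold_subset f l B hx)) hx

/-- after trimming (every element of `B` checked once in the order `l`),
every remaining element has nonnegative marginal contribution. -/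
theorem stmt3 {α : Type*} [DecidableEq α] [Fintype α] (f : Finset α → ℝ)
    (hf : Submodular f) (B : Finset α) (l : List α) (hl : ∀ x ∈ B, x ∈ l)
    (A : Finset α) (hA : A = trimFold f l B) :
    ∀ x ∈ A, f A - f (A.erase x) ≥ 0 :=
  stmt3_general f hf B l hl A hA
end

section
/- Let f be a nonnegative submodular function on a finite ground set Ω, let O and T be finite subsets of Ω with |O| ≥ |T|, and suppose f(T) − f(T \ {y}) ≥ 0 for all y ∈ T. Let π : O → T ∪ {∅} be an injective partial matching that fixes every element of O ∩ T and maps each element of O \ T either to no element or to a distinct element of T \ O. For x ∈ O define ∇(x,T) = 0 if x ∈ T, and otherwise ∇(x,T) = max{0, max_{y ∈ T}(f((T∪{x})\{y}) − f(T)), [f(T∪{x}) − f(T) if π(x) = ∅]}. Then ∑_{x∈O} ∇(x,T) ≥ f(O ∪ T) − 2 f(T). -/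
/-- The local-search gain `∇(x, T)` of an item `x` with respect to the current feasible set `T`:
`0` if `x ∈ T`; otherwise the maximum of `0`, all swap gains `f((T∪{x})\{y}) − f T` for `y ∈ T`,
and additionally the direct-add gain `f(T∪{x}) − f T` when `π x = none`. -/
noncomputable def nabla {α : Type*} [DecidableEq α] (f : Finset α → ℝ)
    (T : Finset α) (π : α → Option α) (x : α) : ℝ :=
  if x ∈ T then 0
  else (insert (0 : ℝ)
        ((T.image fun y => f ((insert x T).erase y) - f T) ∪
          (if π x = none then {f (insert x T) - f T} else ∅))).max' (by simp)

namespace Submodular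

variable {α : Type*} [DecidableEq α] {f : Finset α → ℝ}

theorem marginal_antitone (hf : Submodular f) {A B : Finset α} (hAB : A ⊆ B) {x : α}
    (hx : x ∉ B) : f (insert x B) - f B ≤ f (insert x A) - f A := by
  have h := hf (insert x A) B
  rw [Finset.insert_union, Finset.union_eq_right.mpr hAB, Finset.insert_inter_of_notMem hx,
    Finset.inter_eq_left.mpr hAB] at h
  linarith

theorem union_sub_le_sum_marginal (hf : Submodular f) (T A : Finset α) :
    f (A ∪ T) - f T ≤ ∑ x ∈ A, (f (insert x T) - f T) := by
  induction A using Finset.induction with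
  | empty => simp
  | @insert a A ha ih =>
    rw [Finset.sum_insert ha, Finset.insert_union]
    by_cases haT : a ∈ T
    · rw [Finset.insert_eq_self.mpr (Finset.mem_union_right A haT),
        Finset.insert_eq_self.mpr haT]
      linarith
    · have := hf.marginal_antitone Finset.subset_union_right (by simp [ha, haT] : a ∉ A ∪ T)
      linarith

theorem sum_removal_le (hf : Submodular f) {S T : Finset α} (hS : S ⊆ T) :
    ∑ y ∈ S, (f T - f (T.erase y)) ≤ f T - f (T \ S) := by
  induction S using Finset.induction with
  | empty => simp
  | @insert a S ha ih =>
    have haT : a ∈ T := hS (Finset.mem_insert_self a S)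
    have haTS : a ∈ T \ S := Finset.mem_sdiff.mpr ⟨haT, ha⟩
    have hloss := hf.marginal_antitone
      (Finset.erase_subset_erase a (Finset.sdiff_subset : T \ S ⊆ T)) (Finset.notMem_erase a T)
    rw [Finset.insert_erase haT, Finset.insert_erase haTS] at hloss
    rw [Finset.sum_insert ha, Finset.sdiff_insert]
    linarith [ih ((Finset.subset_insert a S).trans hS)]

theorem marginal_sub_removal_le_swap (hf : Submodular f) {T : Finset α} {x y : α}
    (hxy : x ≠ y) :
    f (insert x T) - f T - (f T - f (T.erase y)) ≤ f ((insert x T).erase y) - f T := by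
  have hunion : (insert x T).erase y ∪ T = insert x T := by
    ext z
    simp only [Finset.mem_union, Finset.mem_erase, Finset.mem_insert]
    grind
  have hinter : (insert x T).erase y ∩ T = T.erase y := by
    ext z
    simp only [Finset.mem_inter, Finset.mem_erase, Finset.mem_insert]
    grind
  have h := hf ((insert x T).erase y) T
  rw [hunion, hinter] at h
  linarith

end Submodular

theorem sum_sum_ite_some_le {ι κ M : Type*} [DecidableEq κ] [AddCommMonoid M] [PartialOrder M]
    [IsOrderedAddMonoid M] {s : Finset ι} {t : Finset κ} {π : ι → Option κ} {g : κ → M}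
    (hg : ∀ y ∈ t, 0 ≤ g y)
    (hπ : ∀ x ∈ s, ∀ x' ∈ s, ∀ y, π x = some y → π x' = some y → x = x') :
    ∑ x ∈ s, ∑ y ∈ t, (if π x = some y then g y else 0) ≤ ∑ y ∈ t, g y := by
  rw [Finset.sum_comm]
  refine Finset.sum_le_sum fun y hy => ?_
  have hfiber : (s.filter fun x => π x = some y).card ≤ 1 :=
    Finset.card_le_one.mpr fun a ha b hb =>
      hπ a (Finset.mem_filter.mp ha).1 b (Finset.mem_filter.mp hb).1 y
        (Finset.mem_filter.mp ha).2 (Finset.mem_filter.mp hb).2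
  calc ∑ x ∈ s, (if π x = some y then g y else 0)
      = (s.filter fun x => π x = some y).card • g y := by
        rw [← Finset.sum_filter, Finset.sum_const]
    _ ≤ 1 • g y := nsmul_le_nsmul_left (hg y hy) hfiber
    _ = g y := one_nsmul _

section nabla

variable {α : Type*} [DecidableEq α] {f : Finset α → ℝ} {T : Finset α} {π : α → Option α} {x : α}

theorem le_nabla_of_swap (hx : x ∉ T) {y : α} (hy : y ∈ T) :
    f ((insert x T).erase y) - f T ≤ nabla f T π x := by
  rw [nabla, if_neg hx]
  refine Finset.le_max' _ _ (Finset.mem_insert_of_mem (Finset.mem_union_left _ ?_))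
  exact Finset.mem_image_of_mem (fun y => f ((insert x T).erase y) - f T) hy

theorem le_nabla_of_add (hx : x ∉ T) (hπ : π x = none) :
    f (insert x T) - f T ≤ nabla f T π x := by
  rw [nabla, if_neg hx]
  exact Finset.le_max' _ _ (by simp [hπ])

/-- The paper's `f T − f (T \ {π x})`, read as `0` when `π x = none`. -/
def matchedLoss (f : Finset α → ℝ) (T : Finset α) (π : α → Option α) (x : α) : ℝ :=
  ∑ y ∈ T, if π x = some y then f T - f (T.erase y) else 0

theorem matchedLoss_of_eq_some {y : α} (hy : y ∈ T) (hπ : π x = some y) :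
    matchedLoss f T π x = f T - f (T.erase y) := by
  simp [matchedLoss, hπ, hy]

theorem matchedLoss_of_eq_none (hπ : π x = none) : matchedLoss f T π x = 0 := by
  simp [matchedLoss, hπ]

theorem marginal_sub_matchedLoss_le_nabla_of_mem (hx : x ∈ T) (hπ : π x = some x)
    (hloss : 0 ≤ f T - f (T.erase x)) :
    f (insert x T) - f T - matchedLoss f T π x ≤ nabla f T π x := by
  rw [matchedLoss_of_eq_some hx hπ, nabla, if_pos hx, Finset.insert_eq_self.mpr hx]
  linarith

theorem Submodular.marginal_sub_matchedLoss_le_nabla_of_notMem (hf : Submodular f)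
    (hx : x ∉ T) (hπ : π x = none ∨ ∃ y ∈ T, π x = some y) :
    f (insert x T) - f T - matchedLoss f T π x ≤ nabla f T π x := by
  obtain hnone | ⟨y, hy, hsome⟩ := hπ
  · rw [matchedLoss_of_eq_none hnone, sub_zero]
    exact le_nabla_of_add hx hnone
  · rw [matchedLoss_of_eq_some hy hsome]
    exact (hf.marginal_sub_removal_le_swap (ne_of_mem_of_not_mem hy hx).symm).trans
      (le_nabla_of_swap hx hy)

end nabla

theorem stmt8_general {α : Type*} [DecidableEq α] (f : Finset α → ℝ)
    (hf : Submodular f) (hf0 : ∀ S : Finset α, 0 ≤ f S)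
    (O T : Finset α)
    (hT : ∀ y ∈ T, f T - f (T.erase y) ≥ 0)
    (π : α → Option α)
    (hfix : ∀ x ∈ O ∩ T, π x = some x)
    (hmap : ∀ x ∈ O, x ∉ T → π x = none ∨ ∃ y, π x = some y ∧ y ∈ T \ O)
    (hinj : ∀ x ∈ O, ∀ x' ∈ O, ∀ y : α, π x = some y → π x' = some y → x = x') :
    ∑ x ∈ O, nabla f T π x ≥ f (O ∪ T) - 2 * f T := by
  have hpointwise : ∀ x ∈ O, f (insert x T) - f T - matchedLoss f T π x ≤ nabla f T π x := by
    intro x hxO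
    by_cases hxT : x ∈ T
    · exact marginal_sub_matchedLoss_le_nabla_of_mem hxT
        (hfix x (Finset.mem_inter.mpr ⟨hxO, hxT⟩)) (hT x hxT)
    · refine hf.marginal_sub_matchedLoss_le_nabla_of_notMem hxT ?_
      obtain hnone | ⟨y, hsome, hy⟩ := hmap x hxO hxT
      exacts [Or.inl hnone, Or.inr ⟨y, (Finset.mem_sdiff.mp hy).1, hsome⟩]
  have hcharges : ∑ x ∈ O, matchedLoss f T π x ≤ f T - f ∅ := by
    calc ∑ x ∈ O, matchedLoss f T π x ≤ ∑ y ∈ T, (f T - f (T.erase y)) :=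
          sum_sum_ite_some_le hT hinj
      _ ≤ f T - f ∅ := by simpa using hf.sum_removal_le (subset_refl T)
  calc f (O ∪ T) - 2 * f T
      ≤ ∑ x ∈ O, (f (insert x T) - f T) - (f T - f ∅) := by
        linarith [hf.union_sub_le_sum_marginal T O, hf0 ∅]
    _ ≤ ∑ x ∈ O, (f (insert x T) - f T - matchedLoss f T π x) := by
        rw [Finset.sum_sub_distrib (fun x => f (insert x T) - f T)]
        linarith
    _ ≤ ∑ x ∈ O, nabla f T π x := Finset.sum_le_sum hpointwise

/-- the total local-search gain over `O` is at least `f(O ∪ T) − 2 f(T)`. -/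
theorem stmt8 {α : Type*} [DecidableEq α] [Fintype α] (f : Finset α → ℝ)
    (hf : Submodular f) (hf0 : ∀ S : Finset α, 0 ≤ f S)
    (O T : Finset α) (hcard : T.card ≤ O.card)
    (hT : ∀ y ∈ T, f T - f (T.erase y) ≥ 0)
    (π : α → Option α)
    (hfix : ∀ x ∈ O ∩ T, π x = some x)
    (hmap : ∀ x ∈ O, x ∉ T → π x = none ∨ ∃ y, π x = some y ∧ y ∈ T \ O)
    (hinj : ∀ x ∈ O, ∀ x' ∈ O, ∀ y : α, π x = some y → π x' = some y → x = x') :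
    ∑ x ∈ O, nabla f T π x ≥ f (O ∪ T) - 2 * f T :=
  stmt8_general f hf hf0 O T hT π hfix hmap hinj
end

section
/- Let f : 2^Ω → ℝ_{≥0} be a nonnegative submodular function on a finite ground set Ω, and let A ⊆ Ω be a fixed set. Let R be a random subset of Ω such that each element of Ω belongs to R with probability at most p (not necessarily independently). Then E[f(A ∪ R)] ≥ (1 − p) f(A). -/
section

open Finset

variable {α : Type*} [DecidableEq α]

theorem Submodular.comp_union_left {f : Finset α → ℝ} (hf : Submodular f) (A : Finset α) :
    Submodular (fun S => f (A ∪ S)) := fun S T => by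
  dsimp only
  rw [union_union_distrib_left, union_inter_distrib_left]
  exact hf (A ∪ S) (A ∪ T)

theorem Submodular.comp_insert {f : Finset α → ℝ} (hf : Submodular f) (a : α) :
    Submodular (fun S => f (insert a S)) := fun S T => by
  dsimp only
  rw [insert_eq a, insert_eq a, insert_eq a, insert_eq a]
  exact hf.comp_union_left {a} S T

theorem Submodular.insert_add_empty_le {f : Finset α → ℝ} (hf : Submodular f) {a : α}
    {S : Finset α} (ha : a ∉ S) : f (insert a S) + f ∅ ≤ f S + f {a} := by
  simpa only [union_singleton, inter_singleton_of_notMem ha] using hf S {a}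

section RandomSet

variable {ι : Type*} [Fintype ι] (w : ι → ℝ)

/-- `Pr[a ∈ R]` for the random set `R` taking the value `R i` with probability `w i`. -/
def inclusionProb (R : ι → Finset α) (a : α) : ℝ :=
  ∑ i ∈ univ.filter (fun i => a ∈ R i), w i

variable {w}

theorem inclusionProb_nonneg (hw0 : ∀ i, 0 ≤ w i) (R : ι → Finset α) (a : α) :
    0 ≤ inclusionProb w R a :=
  sum_nonneg fun i _ => hw0 i

theorem inclusionProb_mono (hw0 : ∀ i, 0 ≤ w i) {R R' : ι → Finset α} (hRR' : ∀ i, R' i ⊆ R i)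
    (a : α) : inclusionProb w R' a ≤ inclusionProb w R a :=
  sum_le_sum_of_subset_of_nonneg (monotone_filter_right _ fun i _ h => hRR' i h)
    fun i _ _ => hw0 i

theorem inclusionProb_eq_zero {R : ι → Finset α} {a : α} (ha : ∀ i, a ∉ R i) :
    inclusionProb w R a = 0 := by
  simp [inclusionProb, ha]

theorem sum_ite_mem_zero_eq_one_sub_inclusionProb (hw1 : ∑ i, w i = 1) (R : ι → Finset α)
    (a : α) : ∑ i, (if a ∈ R i then 0 else w i) = 1 - inclusionProb w R a := by
  rw [← hw1, ← sum_filter_add_sum_filter_not univ (fun i => a ∈ R i) w, sum_ite]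
  simp [inclusionProb]

theorem Submodular.sum_mul_insert_erase_le {f : Finset α → ℝ} (hf : Submodular f)
    (hw0 : ∀ i, 0 ≤ w i) (hw1 : ∑ i, w i = 1) (R : ι → Finset α) (a : α) :
    ∑ i, w i * f (insert a ((R i).erase a)) - (1 - inclusionProb w R a) * (f {a} - f ∅)
      ≤ ∑ i, w i * f (R i) := by
  have hpoint : ∀ i, w i * f (insert a ((R i).erase a))
      ≤ w i * f (R i) + (if a ∈ R i then 0 else w i) * (f {a} - f ∅) := by
    intro i
    by_cases ha : a ∈ R i
    · simp [ha, insert_erase ha]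
    · simp only [ha, if_false, erase_eq_of_notMem ha]
      nlinarith [hf.insert_add_empty_le ha, hw0 i]
  have hsum := sum_le_sum fun i (_ : i ∈ univ) => hpoint i
  rw [sum_add_distrib, ← sum_mul, sum_ite_mem_zero_eq_one_sub_inclusionProb hw1] at hsum
  linarith

theorem Submodular.one_sub_mul_le_sum_mul (hw0 : ∀ i, 0 ≤ w i) (hw1 : ∑ i, w i = 1)
    (U : Finset α) {f : Finset α → ℝ} (hf : Submodular f) (hf0 : ∀ S, 0 ≤ f S)
    {R : ι → Finset α} (hRU : ∀ i, R i ⊆ U) {p : ℝ} (hp0 : 0 ≤ p)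
    (hR : ∀ a, inclusionProb w R a ≤ p) :
    (1 - p) * f ∅ ≤ ∑ i, w i * f (R i) := by
  induction U using Finset.strongInduction generalizing f R p with
  | H U ih =>
  rcases U.eq_empty_or_nonempty with rfl | hU
  · have hRempty : ∀ i, R i = ∅ := fun i => subset_empty.mp (hRU i)
    simp only [hRempty, ← sum_mul, hw1]
    nlinarith [hf0 ∅]
  obtain ⟨a, haU, hmax⟩ := U.exists_max_image (inclusionProb w R) hU
  have herase : ∀ b, inclusionProb w (fun i => (R i).erase a) b ≤ inclusionProb w R a := by
    intro b
    by_cases hb : b ∈ U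
    · exact (inclusionProb_mono hw0 (fun i => erase_subset a (R i)) b).trans (hmax b hb)
    · rw [inclusionProb_eq_zero fun i hbi => hb (hRU i (mem_of_mem_erase hbi))]
      exact inclusionProb_nonneg hw0 R a
  have hIH := ih (U.erase a) (erase_ssubset haU) (hf.comp_insert a) (fun S => hf0 _)
    (fun i => erase_subset_erase a (hRU i)) (inclusionProb_nonneg hw0 R a) herase
  have hstep := hf.sum_mul_insert_erase_le hw0 hw1 R a
  have hq : (1 - p) * f ∅ ≤ (1 - inclusionProb w R a) * f ∅ :=
    mul_le_mul_of_nonneg_right (by linarith [hR a]) (hf0 ∅)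
  simp only [insert_empty] at hIH
  linarith

end RandomSet

end

theorem stmt10_general {α : Type*} [DecidableEq α]
    {ι : Type*} [Fintype ι]
    (f : Finset α → ℝ) (hf : Submodular f) (hf0 : ∀ S : Finset α, 0 ≤ f S)
    (A : Finset α) (p : ℝ) (hp0 : 0 ≤ p)
    (w : ι → ℝ) (hw0 : ∀ i, 0 ≤ w i) (hw1 : ∑ i, w i = 1)
    (R : ι → Finset α)
    (hR : ∀ a : α, ∑ i ∈ Finset.univ.filter (fun i => a ∈ R i), w i ≤ p) :
    ∑ i, w i * f (A ∪ R i) ≥ (1 - p) * f A := by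
  have h := (hf.comp_union_left A).one_sub_mul_le_sum_mul hw0 hw1 (Finset.univ.biUnion R)
    (fun S => hf0 _) (fun i => Finset.subset_biUnion_of_mem R (Finset.mem_univ i)) hp0 hR
  simpa only [Finset.union_empty] using h

/-- Lemma 2.2 of Buchbinder–Feldman–Naor–Schwartz 2014:
if each element lies in the random set `R` with probability at most `p`
(over a finite probability space `ι` with weights `w`), then
`E[f(A ∪ R)] ≥ (1 − p)·f(A)` for nonnegative submodular `f`. -/
theorem stmt10 {α : Type*} [DecidableEq α] [Fintype α]
    {ι : Type*} [Fintype ι] [DecidableEq ι]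
    (f : Finset α → ℝ) (hf : Submodular f) (hf0 : ∀ S : Finset α, 0 ≤ f S)
    (A : Finset α) (p : ℝ) (hp0 : 0 ≤ p) (hp1 : p ≤ 1)
    (w : ι → ℝ) (hw0 : ∀ i, 0 ≤ w i) (hw1 : ∑ i, w i = 1)
    (R : ι → Finset α)
    (hR : ∀ a : α, ∑ i ∈ Finset.univ.filter (fun i => a ∈ R i), w i ≤ p) :
    ∑ i, w i * f (A ∪ R i) ≥ (1 - p) * f A :=
  stmt10_general f hf hf0 A p hp0 w hw0 hw1 R hR
end

section
/- Let l ≥ 1 and let (X_t)_{t=0}^{l} be nonnegative reals with X_0 = 0 satisfying X_{t+1} − X_t ≥ (1/l) V − (2/l) X_t for all 0 ≤ t < l, where V ≥ 0. Then X_l ≥ ((1 − (1 − 2/l)^l)/2) V, and in particular X_l ≥ ((1 − e^{−2})/2) V. -/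
/-! The recurrence says that the gap `V / 2 - X t` to the fixed point `V / 2` shrinks at least by
the factor `1 - 2 / l` at each step, so after `l` steps it is at most `(1 - 2 / l) ^ l * V / 2`;
finally `(1 - 2 / l) ^ l ≤ e ^ (-2)`. -/

open Real

lemma half_sub_le_pow_mul_of_recurrence {l : ℕ} {V : ℝ} {X : ℕ → ℝ}
    (hrec : ∀ t < l, X (t + 1) - X t ≥ (1 / l) * V - (2 / l) * X t) :
    V / 2 - X l ≤ (1 - 2 / (l : ℝ)) ^ l * (V / 2 - X 0) := by
  have step : ∀ t < l, V / 2 - X (t + 1) ≤ (1 - 2 / (l : ℝ)) * (V / 2 - X t) := by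
    intro t ht
    have hfix : (1 - 2 / (l : ℝ)) * (V / 2 - X t) =
        V / 2 - (X t + (1 / l) * V - (2 / l) * X t) := by
      ring
    linarith [hrec t ht]
  obtain hl | hl := le_or_gt 2 l
  · have hc : 0 ≤ 1 - 2 / (l : ℝ) := by
      rw [sub_nonneg, div_le_one (by positivity)]
      exact_mod_cast hl
    exact le_geom (u := fun t ↦ V / 2 - X t) hc l step
  · -- for `l = 1` the factor `-1` is negative, but a single step needs no sign condition
    interval_cases l
    · simp
    · simpa using step 0 one_pos

lemma one_sub_two_div_pow_le_exp_neg_two {l : ℕ} (hl : 1 ≤ l) :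
    (1 - 2 / (l : ℝ)) ^ l ≤ exp (-2) := by
  obtain rfl | hl := hl.eq_or_lt
  · norm_num
    linarith [exp_pos (-2)]
  · exact one_sub_div_pow_le_exp_neg (by exact_mod_cast hl)

theorem stmt14_general (l : ℕ) (hl : 1 ≤ l) (V : ℝ) (hV : 0 ≤ V)
    (X : ℕ → ℝ) (hX0 : X 0 = 0)
    (hrec : ∀ t < l, X (t + 1) - X t ≥ (1 / l) * V - (2 / l) * X t) :
    X l ≥ ((1 - (1 - 2 / (l : ℝ)) ^ l) / 2) * V ∧
    X l ≥ ((1 - Real.exp (-2)) / 2) * V := by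
  have hgap := half_sub_le_pow_mul_of_recurrence hrec
  rw [hX0, sub_zero] at hgap
  have hfirst : X l ≥ ((1 - (1 - 2 / (l : ℝ)) ^ l) / 2) * V := by linarith
  refine ⟨hfirst, hfirst.trans' ?_⟩
  gcongr
  exact one_sub_two_div_pow_le_exp_neg_two hl

/-- the recurrence from the monotone analysis of Sampling-Greedy. -/
theorem stmt14 (l : ℕ) (hl : 1 ≤ l) (V : ℝ) (hV : 0 ≤ V)
    (X : ℕ → ℝ) (hX0 : X 0 = 0) (hXnonneg : ∀ t, 0 ≤ X t)
    (hrec : ∀ t < l, X (t + 1) - X t ≥ (1 / l) * V - (2 / l) * X t) :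
    X l ≥ ((1 - (1 - 2 / (l : ℝ)) ^ l) / 2) * V ∧
    X l ≥ ((1 - Real.exp (-2)) / 2) * V :=
  stmt14_general l hl V hV X hX0 hrec
end
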